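/- arXiv:1903.00215 — 3 statements merged into one kernel-verified Lean document; each statement's English description precedes it below -/
import Mathlib

section
/- Let μ and μ_n (n ∈ ℕ) be non-atomic Borel probability measures on [0,1] whose distribution functions F_n(x) = μ_n([0,x]) converge uniformly on [0,1] to F(x) = μ([0,x]). Then the functions sinp_n, sinq_n, cosp_n, cosq_n converge to sinp, sinq, cosp, cosq uniformly on every bounded interval of ℝ, and the derivatives sinp_n', sinq_n', cosp_n', cosq_n' converge to sinp', sinq', cosp', cosq' uniformly on every bounded interval of ℝ. -/
open MeasureTheory Real Filter

/-- Iterated integrals `p_n` w.r.t. a measure `ν`: `p_0 = 1`,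
`p_n(x) = ∫_0^x p_{n-1} dν` if `n` odd, `p_n(x) = ∫_0^x p_{n-1} dt` if `n` even. -/
noncomputable def pIter (ν : Measure ℝ) : ℕ → ℝ → ℝ
  | 0 => fun _ => 1
  | (n+1) => fun x =>
      if Odd (n+1) then ∫ t in Set.Ioc (0:ℝ) x, pIter ν n t ∂ν
      else ∫ t in Set.Ioc (0:ℝ) x, pIter ν n t

/-- Iterated integrals `q_n` w.r.t. a measure `ν`: `q_0 = 1`,
`q_n(x) = ∫_0^x q_{n-1} dt` if `n` odd, `q_n(x) = ∫_0^x q_{n-1} dν` if `n` even. -/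
noncomputable def qIter (ν : Measure ℝ) : ℕ → ℝ → ℝ
  | 0 => fun _ => 1
  | (n+1) => fun x =>
      if Odd (n+1) then ∫ t in Set.Ioc (0:ℝ) x, qIter ν n t
      else ∫ t in Set.Ioc (0:ℝ) x, qIter ν n t ∂ν

noncomputable def spF (ν : Measure ℝ) (z x : ℝ) : ℝ :=
  ∑' n : ℕ, (-1)^n * z^(2*n+1) * pIter ν (2*n+1) x

noncomputable def sqF (ν : Measure ℝ) (z x : ℝ) : ℝ :=
  ∑' n : ℕ, (-1)^n * z^(2*n+1) * qIter ν (2*n+1) x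

noncomputable def cpF (ν : Measure ℝ) (z x : ℝ) : ℝ :=
  ∑' n : ℕ, (-1)^n * z^(2*n) * pIter ν (2*n) x

noncomputable def cqF (ν : Measure ℝ) (z x : ℝ) : ℝ :=
  ∑' n : ℕ, (-1)^n * z^(2*n) * qIter ν (2*n) x

noncomputable def sinpF (ν : Measure ℝ) (z : ℝ) : ℝ := spF ν z 1
noncomputable def sinqF (ν : Measure ℝ) (z : ℝ) : ℝ := sqF ν z 1
noncomputable def cospF (ν : Measure ℝ) (z : ℝ) : ℝ := cpF ν z 1
noncomputable def cosqF (ν : Measure ℝ) (z : ℝ) : ℝ := cqF ν z 1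

/-- distribution function `F(x) = ν [0,x]` -/
noncomputable def distF (ν : Measure ℝ) (x : ℝ) : ℝ := (ν (Set.Icc 0 x)).toReal

/-- supremum distance of two functions over `[0,1]` -/
noncomputable def supDist (f g : ℝ → ℝ) : ℝ := ⨆ x : Set.Icc (0:ℝ) 1, |f x.1 - g x.1|

section AuxProof

open Topology

section DistF

lemma distF_nonneg (ν : Measure ℝ) (x : ℝ) : 0 ≤ distF ν x := ENNReal.toReal_nonneg

lemma distF_le_one (ν : Measure ℝ) [IsProbabilityMeasure ν] (x : ℝ) : distF ν x ≤ 1 := by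
  have h := prob_le_one (μ := ν) (s := Set.Icc 0 x)
  have := ENNReal.toReal_mono ENNReal.one_ne_top h
  simpa [distF] using this

lemma distF_mono (ν : Measure ℝ) [IsProbabilityMeasure ν] : Monotone (distF ν) := by
  intro x y hxy
  exact ENNReal.toReal_mono (measure_ne_top ν _) (measure_mono (Set.Icc_subset_Icc_right hxy))

lemma distF_measurable (ν : Measure ℝ) [IsProbabilityMeasure ν] : Measurable (distF ν) :=
  (distF_mono ν).measurable

lemma distF_diff (ν : Measure ℝ) [IsProbabilityMeasure ν] {s x : ℝ} (h0 : 0 ≤ s) (hsx : s ≤ x) :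
    (ν (Set.Ioc s x)).toReal = distF ν x - distF ν s := by
  have hU : Set.Icc (0:ℝ) s ∪ Set.Ioc s x = Set.Icc 0 x := Set.Icc_union_Ioc_eq_Icc h0 hsx
  have hd : Disjoint (Set.Icc (0:ℝ) s) (Set.Ioc s x) := by
    rw [Set.disjoint_left]; rintro t ⟨_, hts⟩ ⟨hst, _⟩; exact absurd hts (not_le.2 hst)
  have hm : ν (Set.Icc 0 x) = ν (Set.Icc 0 s) + ν (Set.Ioc s x) := by
    rw [← hU, measure_union hd measurableSet_Ioc]
  simp only [distF]
  rw [hm, ENNReal.toReal_add (measure_ne_top ν _) (measure_ne_top ν _)]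
  ring

end DistF

def Nice (g : ℝ → ℝ) : Prop := Measurable g ∧ ∀ s, 0 ≤ g s ∧ g s ≤ Real.exp (max s 0)

noncomputable def TInt (ν : Measure ℝ) (g : ℝ → ℝ) (x : ℝ) : ℝ :=
  ∫ s in Set.Ioc (0:ℝ) x, g s * (distF ν x - distF ν s)

noncomputable def TIter (ν : Measure ℝ) (g : ℝ → ℝ) : ℕ → ℝ → ℝ
  | 0 => g
  | (k+1) => TInt ν (TIter ν g k)

lemma integrableOn_of_bounded' {m : Measure ℝ} {g : ℝ → ℝ} (hg : Measurable g)
    {a b C : ℝ} (hfin : m (Set.Ioc a b) ≠ ⊤) (hC : ∀ s ∈ Set.Ioc a b, |g s| ≤ C) :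
    IntegrableOn g (Set.Ioc a b) m := by
  have hconst : IntegrableOn (fun _ => C) (Set.Ioc a b) m :=
    integrableOn_const hfin
  refine Integrable.mono' hconst hg.aestronglyMeasurable ?_
  exact (ae_restrict_iff' measurableSet_Ioc).2 (ae_of_all _ fun s hs => by
    simpa using hC s hs)

lemma Nice.abs_le {g : ℝ → ℝ} (hg : Nice g) {x s : ℝ} (hs : s ≤ x) :
    |g s| ≤ Real.exp (max x 0) := by
  rw [abs_of_nonneg (hg.2 s).1]
  exact (hg.2 s).2.trans (Real.exp_le_exp.2 (max_le_max hs le_rfl))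

lemma Nice.integrableOn {g : ℝ → ℝ} (hg : Nice g) (m : Measure ℝ) {x : ℝ}
    (hfin : m (Set.Ioc 0 x) ≠ ⊤) : IntegrableOn g (Set.Ioc (0:ℝ) x) m :=
  integrableOn_of_bounded' hg.1 hfin fun s hs => hg.abs_le hs.2

lemma integrableOn_TInt_integrand (ν : Measure ℝ) [IsProbabilityMeasure ν] {g : ℝ → ℝ}
    (hg : Nice g) (x : ℝ) :
    IntegrableOn (fun s => g s * (distF ν x - distF ν s)) (Set.Ioc (0:ℝ) x) volume := by
  refine integrableOn_of_bounded' (hg.1.mul (measurable_const.sub (distF_measurable ν)))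
    (by simp [measure_Ioc_lt_top.ne]) (C := Real.exp (max x 0)) fun s hs => ?_
  show |g s * (distF ν x - distF ν s)| ≤ _
  rw [abs_mul]
  calc |g s| * |distF ν x - distF ν s| ≤ Real.exp (max x 0) * 1 := by
        apply mul_le_mul (hg.abs_le hs.2) ?_ (abs_nonneg _) (Real.exp_pos _).le
        rw [abs_le]
        constructor
        · have := distF_le_one ν s; have := distF_nonneg ν x; linarith
        · have := distF_le_one ν x; have := distF_nonneg ν s; linarith
    _ = Real.exp (max x 0) := mul_one _

lemma monotone_primitive {g : ℝ → ℝ} (hg : Nice g) :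
    Monotone (fun x => ∫ s in Set.Ioc (0:ℝ) x, g s) := by
  intro x y hxy
  have hint : IntegrableOn g (Set.Ioc (0:ℝ) y) volume :=
    hg.integrableOn volume (by simp [measure_Ioc_lt_top.ne])
  exact setIntegral_mono_set hint (ae_of_all _ fun s => (hg.2 s).1)
    ((Set.Ioc_subset_Ioc_right hxy).eventuallyLE)

lemma nice_Top (ν : Measure ℝ) [IsProbabilityMeasure ν] {g : ℝ → ℝ} (hg : Nice g) :
    Nice (TInt ν g) := by
  have hgF : Nice fun s => g s * distF ν s := by
    refine ⟨hg.1.mul (distF_measurable ν), fun s => ⟨mul_nonneg (hg.2 s).1 (distF_nonneg ν s), ?_⟩⟩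
    calc g s * distF ν s ≤ g s * 1 :=
          mul_le_mul_of_nonneg_left (distF_le_one ν s) (hg.2 s).1
      _ = g s := mul_one _
      _ ≤ Real.exp (max s 0) := (hg.2 s).2
  have key : TInt ν g = fun x =>
      distF ν x * (∫ s in Set.Ioc (0:ℝ) x, g s) - ∫ s in Set.Ioc (0:ℝ) x, g s * distF ν s := by
    funext x
    have h1 : IntegrableOn g (Set.Ioc (0:ℝ) x) volume :=
      hg.integrableOn volume (by simp [measure_Ioc_lt_top.ne])
    have h2 : IntegrableOn (fun s => g s * distF ν s) (Set.Ioc (0:ℝ) x) volume :=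
      hgF.integrableOn volume (by simp [measure_Ioc_lt_top.ne])
    unfold TInt
    simp_rw [mul_sub]
    rw [integral_sub (h1.mul_const _) h2, integral_mul_const]
    ring
  constructor
  · rw [key]
    exact ((distF_measurable ν).mul (monotone_primitive hg).measurable).sub
      (monotone_primitive hgF).measurable
  · intro x
    constructor
    · apply setIntegral_nonneg measurableSet_Ioc
      intro s hs
      exact mul_nonneg (hg.2 s).1 (sub_nonneg.2 (distF_mono ν hs.2))
    · rcases le_or_gt x 0 with hx | hx
      · rw [show TInt ν g x = 0 by simp [TInt, Set.Ioc_eq_empty (not_lt.2 hx)]]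
        positivity
      · have hx0 : (0:ℝ) ≤ x := hx.le
        have hbound : TInt ν g x ≤ ∫ s in Set.Ioc (0:ℝ) x, Real.exp s := by
          apply setIntegral_mono_on (integrableOn_TInt_integrand ν hg x)
            (Real.continuous_exp.integrableOn_Ioc) measurableSet_Ioc
          intro s hs
          calc g s * (distF ν x - distF ν s) ≤ g s * 1 := by
                apply mul_le_mul_of_nonneg_left ?_ (hg.2 s).1
                have := distF_le_one ν x; have := distF_nonneg ν s; linarith
            _ = g s := mul_one _
            _ ≤ Real.exp (max s 0) := (hg.2 s).2
            _ = Real.exp s := by rw [max_eq_left hs.1.le]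
        calc TInt ν g x ≤ ∫ s in Set.Ioc (0:ℝ) x, Real.exp s := hbound
          _ = Real.exp x - Real.exp 0 := by
              rw [← intervalIntegral.integral_of_le hx0, integral_exp]
          _ ≤ Real.exp (max x 0) := by
              rw [max_eq_left hx0, Real.exp_zero]; linarith [Real.exp_pos x]

lemma nice_TIter (ν : Measure ℝ) [IsProbabilityMeasure ν] {g : ℝ → ℝ} (hg : Nice g) :
    ∀ k, Nice (TIter ν g k)
  | 0 => hg
  | (k+1) => nice_Top ν (nice_TIter ν hg k)

lemma setIntegral_pow_div (k : ℕ) {x : ℝ} (hx : 0 ≤ x) :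
    ∫ s in Set.Ioc (0:ℝ) x, s ^ k / (k.factorial : ℝ) = x ^ (k+1) / ((k+1).factorial : ℝ) := by
  have hf : (k.factorial : ℝ) ≠ 0 := Nat.cast_ne_zero.2 k.factorial_ne_zero
  have hk1 : ((k:ℝ) + 1) ≠ 0 := by positivity
  rw [← intervalIntegral.integral_of_le hx, intervalIntegral.integral_div, integral_pow,
    Nat.factorial_succ]
  push_cast
  field_simp
  simp


lemma TIter_bound (ν : Measure ℝ) [IsProbabilityMeasure ν] {g : ℝ → ℝ} (hg : Nice g)
    (hg1 : ∀ s ∈ Set.Icc (0:ℝ) 1, g s ≤ 1) :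
    ∀ k, ∀ x ∈ Set.Icc (0:ℝ) 1, TIter ν g k x ≤ x ^ k / (k.factorial : ℝ) := by
  intro k
  induction k with
  | zero => intro x hx; simpa [TIter] using hg1 x hx
  | succ k ih =>
    intro x hx
    have hN : Nice (TIter ν g k) := nice_TIter ν hg k
    have hpowint : IntegrableOn (fun s => s ^ k / (k.factorial : ℝ)) (Set.Ioc (0:ℝ) x) volume :=
      ((continuous_pow k).div_const _).integrableOn_Ioc
    have h1 : TInt ν (TIter ν g k) x ≤ ∫ s in Set.Ioc (0:ℝ) x, s ^ k / (k.factorial : ℝ) := by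
      apply setIntegral_mono_on (integrableOn_TInt_integrand ν hN x) hpowint measurableSet_Ioc
      intro s hs
      calc TIter ν g k s * (distF ν x - distF ν s) ≤ TIter ν g k s * 1 := by
            apply mul_le_mul_of_nonneg_left ?_ (hN.2 s).1
            have := distF_le_one ν x; have := distF_nonneg ν s; linarith
        _ = TIter ν g k s := mul_one _
        _ ≤ s ^ k / (k.factorial : ℝ) := ih s ⟨hs.1.le, hs.2.trans hx.2⟩
    rw [setIntegral_pow_div k hx.1] at h1
    exact h1

lemma TIter_nonneg (ν : Measure ℝ) [IsProbabilityMeasure ν] {g : ℝ → ℝ} (hg : Nice g)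
    (k : ℕ) (x : ℝ) : 0 ≤ TIter ν g k x := ((nice_TIter ν hg k).2 x).1

lemma TIter_le_one (ν : Measure ℝ) [IsProbabilityMeasure ν] {g : ℝ → ℝ} (hg : Nice g)
    (hg1 : ∀ s ∈ Set.Icc (0:ℝ) 1, g s ≤ 1) (k : ℕ) :
    ∀ x ∈ Set.Icc (0:ℝ) 1, TIter ν g k x ≤ 1 := by
  intro x hx
  refine (TIter_bound ν hg hg1 k x hx).trans ?_
  rw [div_le_one (by positivity)]
  calc x ^ k ≤ 1 := pow_le_one₀ hx.1 hx.2
    _ ≤ (k.factorial : ℝ) := by exact_mod_cast k.factorial_pos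

lemma fubini_step (ν : Measure ℝ) [IsProbabilityMeasure ν] [NullSingletonClass ν] {g : ℝ → ℝ}
    (hg : Nice g) {x : ℝ} (hx : 0 ≤ x) :
    ∫ t in Set.Ioc (0:ℝ) x, (∫ s in Set.Ioc (0:ℝ) t, g s) ∂ν = TInt ν g x := by
  set S := Set.Ioc (0:ℝ) x with hS
  set C := Real.exp (max x 0) with hC
  set K : ℝ × ℝ → ℝ := fun p => if p.2 ≤ p.1 then g p.2 else 0 with hK
  have hKmeas : Measurable K := by
    have : K = Set.indicator {p : ℝ × ℝ | p.2 ≤ p.1} (fun p => g p.2) := by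
      funext p; by_cases h : p.2 ≤ p.1 <;> simp [hK, h, Set.indicator]
    rw [this]
    exact ((hg.1.comp measurable_snd)).indicator
      (isClosed_le continuous_snd continuous_fst).measurableSet
  haveI : IsFiniteMeasure (volume.restrict S) :=
    ⟨by rw [Measure.restrict_apply_univ]; exact measure_Ioc_lt_top⟩
  have step1 : ∫ t in S, (∫ s in Set.Ioc (0:ℝ) t, g s) ∂ν
      = ∫ t in S, (∫ s in S, K (t, s)) ∂ν := by
    apply setIntegral_congr_fun measurableSet_Ioc
    intro t ht
    have hpt : ∀ s, K (t, s) = (Set.Iic t).indicator g s := by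
      intro s; by_cases h : s ≤ t <;> simp [hK, h, Set.indicator, Set.mem_Iic]
    simp only [hpt]
    rw [setIntegral_indicator measurableSet_Iic]
    congr 1
    rw [hS, Set.Ioc_inter_Iic, min_eq_right ht.2]
  have hae : ∀ᵐ p : ℝ × ℝ ∂((ν.restrict S).prod (volume.restrict S)), p ∈ S ×ˢ S := by
    rw [Measure.prod_restrict]
    exact ae_restrict_mem (measurableSet_Ioc.prod measurableSet_Ioc)
  have hKint : Integrable (Function.uncurry fun t s => K (t, s))
      ((ν.restrict S).prod (volume.restrict S)) := by
    apply Integrable.mono' (integrable_const C)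
    · exact hKmeas.aestronglyMeasurable
    · filter_upwards [hae] with p hp
      have hs2 : p.2 ∈ S := hp.2
      rw [Real.norm_eq_abs]
      have h1 : |K p| ≤ Real.exp (max p.2 0) := by
        by_cases h : p.2 ≤ p.1
        · simp only [hK, if_pos h]
          rw [abs_of_nonneg (hg.2 p.2).1]; exact (hg.2 p.2).2
        · simp only [hK, if_neg h, abs_zero]; positivity
      exact h1.trans (Real.exp_le_exp.2 (max_le_max hs2.2 le_rfl))
  have step2 : ∫ t in S, (∫ s in S, K (t, s)) ∂ν = ∫ s in S, (∫ t in S, K (t, s) ∂ν) := by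
    exact integral_integral_swap hKint
  have step3 : ∀ s ∈ S, (∫ t in S, K (t, s) ∂ν) = g s * (distF ν x - distF ν s) := by
    intro s hs
    have hpt : ∀ t, K (t, s) = (Set.Ici s).indicator (fun _ => g s) t := by
      intro t; by_cases h : s ≤ t <;> simp [hK, h, Set.indicator, Set.mem_Ici]
    simp only [hpt]
    rw [setIntegral_indicator measurableSet_Ici, setIntegral_const]
    have hset : S ∩ Set.Ici s = Set.Icc s x := by
      rw [hS]; ext t
      simp only [Set.mem_inter_iff, Set.mem_Ioc, Set.mem_Ici, Set.mem_Icc]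
      constructor
      · rintro ⟨⟨_, htx⟩, hst⟩; exact ⟨hst, htx⟩
      · rintro ⟨hst, htx⟩; exact ⟨⟨lt_of_lt_of_le hs.1 hst, htx⟩, hst⟩
    rw [hset]
    have hIcc : ν (Set.Icc s x) = ν (Set.Ioc s x) := (measure_congr (Ioc_ae_eq_Icc)).symm
    rw [Measure.real, hIcc, distF_diff ν hs.1.le hs.2, smul_eq_mul, mul_comm]
  rw [step1, step2, setIntegral_congr_fun measurableSet_Ioc step3]
  rfl

lemma niceF (ν : Measure ℝ) [IsProbabilityMeasure ν] : Nice (distF ν) :=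
  ⟨distF_measurable ν, fun s => ⟨distF_nonneg ν s,
    (distF_le_one ν s).trans (Real.one_le_exp (le_max_right s 0))⟩⟩

lemma niceOne : Nice (fun _ => (1:ℝ)) :=
  ⟨measurable_const, fun s => ⟨zero_le_one, Real.one_le_exp (le_max_right s 0)⟩⟩

lemma pIter_odd (ν : Measure ℝ) [IsProbabilityMeasure ν] [NullSingletonClass ν] :
    ∀ k, ∀ x ∈ Set.Icc (0:ℝ) 1, pIter ν (2*k+1) x = TIter ν (distF ν) k x := by
  intro k
  induction k with
  | zero =>
    intro x hx
    have e1 : pIter ν (2*0+1) x = ∫ t in Set.Ioc (0:ℝ) x, (1:ℝ) ∂ν := by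
      show pIter ν (0+1) x = _
      simp only [pIter]
      rw [if_pos ⟨0, by ring⟩]
    rw [e1, setIntegral_const, smul_eq_mul, mul_one]
    show (ν (Set.Ioc 0 x)).toReal = TIter ν (distF ν) 0 x
    have : ν (Set.Ioc 0 x) = ν (Set.Icc 0 x) := measure_congr Ioc_ae_eq_Icc
    rw [this]; rfl
  | succ k ih =>
    intro x hx
    have e1 : pIter ν (2*(k+1)+1) x = ∫ t in Set.Ioc (0:ℝ) x, pIter ν (2*k+2) t ∂ν := by
      rw [show 2*(k+1)+1 = (2*k+2)+1 by ring]
      simp only [pIter]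
      rw [if_pos ⟨k+1, by ring⟩]
    have e2 : ∀ t ∈ Set.Ioc (0:ℝ) x,
        pIter ν (2*k+2) t = ∫ s in Set.Ioc (0:ℝ) t, TIter ν (distF ν) k s := by
      intro t ht
      rw [show 2*k+2 = (2*k+1)+1 by ring]
      simp only [pIter]
      rw [if_neg (by rw [Nat.odd_iff]; omega)]
      exact setIntegral_congr_fun measurableSet_Ioc fun s hs =>
        ih s ⟨hs.1.le, hs.2.trans (ht.2.trans hx.2)⟩
    rw [e1, setIntegral_congr_fun measurableSet_Ioc e2,
      fubini_step ν (nice_TIter ν (niceF ν) k) hx.1]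
    rfl

lemma qIter_even (ν : Measure ℝ) [IsProbabilityMeasure ν] [NullSingletonClass ν] :
    ∀ k, ∀ x ∈ Set.Icc (0:ℝ) 1, qIter ν (2*k) x = TIter ν (fun _ => (1:ℝ)) k x := by
  intro k
  induction k with
  | zero => intro x hx; rfl
  | succ k ih =>
    intro x hx
    have e1 : qIter ν (2*(k+1)) x = ∫ t in Set.Ioc (0:ℝ) x, qIter ν (2*k+1) t ∂ν := by
      rw [show 2*(k+1) = (2*k+1)+1 by ring]
      simp only [qIter]
      rw [if_neg (by rw [Nat.odd_iff]; omega)]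
    have e2 : ∀ t ∈ Set.Ioc (0:ℝ) x,
        qIter ν (2*k+1) t = ∫ s in Set.Ioc (0:ℝ) t, TIter ν (fun _ => (1:ℝ)) k s := by
      intro t ht
      rw [show 2*k+1 = (2*k)+1 by ring]
      simp only [qIter]
      rw [if_pos ⟨k, by ring⟩]
      exact setIntegral_congr_fun measurableSet_Ioc fun s hs =>
        ih s ⟨hs.1.le, hs.2.trans (ht.2.trans hx.2)⟩
    rw [e1, setIntegral_congr_fun measurableSet_Ioc e2,
      fubini_step ν (nice_TIter ν niceOne k) hx.1]
    rfl

lemma pIter_even (ν : Measure ℝ) [IsProbabilityMeasure ν] [NullSingletonClass ν] (k : ℕ) :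
    pIter ν (2*(k+1)) 1 = ∫ s in Set.Ioc (0:ℝ) 1, TIter ν (distF ν) k s := by
  rw [show 2*(k+1) = (2*k+1)+1 by ring]
  simp only [pIter]
  rw [if_neg (by rw [Nat.odd_iff]; omega)]
  exact setIntegral_congr_fun measurableSet_Ioc fun s hs =>
    pIter_odd ν k s ⟨hs.1.le, hs.2⟩

lemma qIter_odd (ν : Measure ℝ) [IsProbabilityMeasure ν] [NullSingletonClass ν] (k : ℕ) :
    qIter ν (2*k+1) 1 = ∫ s in Set.Ioc (0:ℝ) 1, TIter ν (fun _ => (1:ℝ)) k s := by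
  rw [show 2*k+1 = (2*k)+1 by ring]
  simp only [qIter]
  rw [if_pos ⟨k, by ring⟩]
  exact setIntegral_congr_fun measurableSet_Ioc fun s hs =>
    qIter_even ν k s ⟨hs.1.le, hs.2⟩

lemma abs_sub_le' {a b : ℝ} : |a - b| ≤ |a| + |b| := by
  calc |a - b| = |a + (-b)| := by ring_nf
    _ ≤ |a| + |(-b)| := abs_add_le _ _
    _ = |a| + |b| := by rw [abs_neg]

lemma unifTInt {ν : Measure ℝ} [IsProbabilityMeasure ν] {νs : ℕ → Measure ℝ}
    (hps : ∀ n, IsProbabilityMeasure (νs n))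
    {g : ℝ → ℝ} {gs : ℕ → ℝ → ℝ} (hg : Nice g) (hgs : ∀ n, Nice (gs n))
    (hg1 : ∀ s ∈ Set.Icc (0:ℝ) 1, g s ≤ 1)
    (hF : TendstoUniformlyOn (fun n x => distF (νs n) x) (distF ν) atTop (Set.Icc (0:ℝ) 1))
    (hgc : TendstoUniformlyOn (fun n s => gs n s) g atTop (Set.Icc (0:ℝ) 1)) :
    TendstoUniformlyOn (fun n x => TInt (νs n) (gs n) x) (TInt ν g) atTop (Set.Icc (0:ℝ) 1) := by
  rw [Metric.tendstoUniformlyOn_iff] at hF hgc ⊢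
  intro ε hε
  have hε4 : 0 < ε/4 := by linarith
  filter_upwards [hF (ε/4) hε4, hgc (ε/4) hε4] with n hFn hgn
  intro x hx
  haveI := hps n
  rw [Real.dist_eq]
  have hint1 := integrableOn_TInt_integrand ν hg x
  have hint2 := integrableOn_TInt_integrand (νs n) (hgs n) x
  have key : |TInt ν g x - TInt (νs n) (gs n) x|
      ≤ (3*ε/4) * (volume (Set.Ioc (0:ℝ) x)).toReal := by
    unfold TInt
    rw [← integral_sub hint1 hint2, ← Real.norm_eq_abs]
    apply norm_setIntegral_le_of_norm_le_const measure_Ioc_lt_top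
    intro s hs
    have hsI : s ∈ Set.Icc (0:ℝ) 1 := ⟨hs.1.le, hs.2.trans hx.2⟩
    have h1 : |distF ν x - distF (νs n) x| ≤ ε/4 := by
      have := hFn x hx; rw [Real.dist_eq] at this; exact this.le
    have h2 : |distF ν s - distF (νs n) s| ≤ ε/4 := by
      have := hFn s hsI; rw [Real.dist_eq] at this; exact this.le
    have h3 : |g s - gs n s| ≤ ε/4 := by
      have := hgn s hsI; rw [Real.dist_eq] at this; exact this.le
    have hga : 0 ≤ g s := (hg.2 s).1
    have hgb : g s ≤ 1 := hg1 s hsI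
    have hFn1 : |distF (νs n) x - distF (νs n) s| ≤ 1 := by
      rw [abs_le]
      constructor
      · have := distF_le_one (νs n) s; have := distF_nonneg (νs n) x; linarith
      · have := distF_le_one (νs n) x; have := distF_nonneg (νs n) s; linarith
    rw [Real.norm_eq_abs]
    have expand : g s * (distF ν x - distF ν s) - gs n s * (distF (νs n) x - distF (νs n) s)
        = g s * ((distF ν x - distF (νs n) x) - (distF ν s - distF (νs n) s))
          + (g s - gs n s) * (distF (νs n) x - distF (νs n) s) := by ring
    rw [expand]
    calc |g s * ((distF ν x - distF (νs n) x) - (distF ν s - distF (νs n) s))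
          + (g s - gs n s) * (distF (νs n) x - distF (νs n) s)|
        ≤ |g s * ((distF ν x - distF (νs n) x) - (distF ν s - distF (νs n) s))|
          + |(g s - gs n s) * (distF (νs n) x - distF (νs n) s)| := abs_add_le _ _
      _ ≤ 1 * (ε/4 + ε/4) + (ε/4) * 1 := by
          apply add_le_add
          · rw [abs_mul]
            apply mul_le_mul (by rw [abs_of_nonneg hga]; exact hgb)
              (abs_sub_le'.trans (add_le_add h1 h2)) (abs_nonneg _) zero_le_one
          · rw [abs_mul]
            exact mul_le_mul h3 hFn1 (abs_nonneg _) hε4.le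
      _ = 3*ε/4 := by ring
  have hvol : (volume (Set.Ioc (0:ℝ) x)).toReal ≤ 1 := by
    rw [Real.volume_Ioc, ENNReal.toReal_ofReal (by linarith [hx.1])]
    linarith [hx.2]
  calc |TInt ν g x - TInt (νs n) (gs n) x| ≤ (3*ε/4) * (volume (Set.Ioc (0:ℝ) x)).toReal := key
    _ ≤ (3*ε/4) * 1 := by apply mul_le_mul_of_nonneg_left hvol (by linarith)
    _ < ε := by linarith

lemma unifTIter {ν : Measure ℝ} [IsProbabilityMeasure ν] {νs : ℕ → Measure ℝ}
    (hps : ∀ n, IsProbabilityMeasure (νs n))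
    {g : ℝ → ℝ} {gs : ℕ → ℝ → ℝ} (hg : Nice g) (hgs : ∀ n, Nice (gs n))
    (hg1 : ∀ s ∈ Set.Icc (0:ℝ) 1, g s ≤ 1)
    (hF : TendstoUniformlyOn (fun n x => distF (νs n) x) (distF ν) atTop (Set.Icc (0:ℝ) 1))
    (hgc : TendstoUniformlyOn (fun n s => gs n s) g atTop (Set.Icc (0:ℝ) 1)) (k : ℕ) :
    TendstoUniformlyOn (fun n x => TIter (νs n) (gs n) k x) (TIter ν g k) atTop
      (Set.Icc (0:ℝ) 1) := by
  induction k with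
  | zero => exact hgc
  | succ k ih =>
    have h1 : Nice (TIter ν g k) := nice_TIter ν hg k
    have h2 : ∀ n, Nice (TIter (νs n) (gs n) k) := fun n => by
      haveI := hps n; exact nice_TIter (νs n) (hgs n) k
    exact unifTInt hps h1 h2 (TIter_le_one ν hg hg1 k) hF ih

lemma tendsto_setIntegral_of_unif {h : ℝ → ℝ} {hs : ℕ → ℝ → ℝ} (hh : Nice h)
    (hhs : ∀ n, Nice (hs n))
    (hc : TendstoUniformlyOn (fun n s => hs n s) h atTop (Set.Icc (0:ℝ) 1)) :
    Tendsto (fun n => ∫ s in Set.Ioc (0:ℝ) 1, hs n s) atTop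
      (𝓝 (∫ s in Set.Ioc (0:ℝ) 1, h s)) := by
  rw [Metric.tendsto_nhds]
  intro ε hε
  rw [Metric.tendstoUniformlyOn_iff] at hc
  filter_upwards [hc (ε/2) (by linarith)] with n hn
  rw [Real.dist_eq]
  have i1 : IntegrableOn (hs n) (Set.Ioc (0:ℝ) 1) volume :=
    (hhs n).integrableOn volume (by simp [measure_Ioc_lt_top.ne])
  have i2 : IntegrableOn h (Set.Ioc (0:ℝ) 1) volume :=
    hh.integrableOn volume (by simp [measure_Ioc_lt_top.ne])
  have key : |(∫ s in Set.Ioc (0:ℝ) 1, hs n s) - ∫ s in Set.Ioc (0:ℝ) 1, h s|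
      ≤ (ε/2) * (volume (Set.Ioc (0:ℝ) 1)).toReal := by
    rw [← integral_sub i1 i2, ← Real.norm_eq_abs]
    apply norm_setIntegral_le_of_norm_le_const measure_Ioc_lt_top
    intro s hsm
    have := hn s ⟨hsm.1.le, hsm.2⟩
    rw [Real.dist_eq] at this
    rw [Real.norm_eq_abs, abs_sub_comm]
    exact this.le
  have hv : (volume (Set.Ioc (0:ℝ) 1)).toReal = 1 := by
    rw [Real.volume_Ioc]; norm_num
  rw [hv, mul_one] at key
  linarith [key]

lemma summable_aux1 {R : ℝ} (hR : 1 ≤ R) :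
    Summable (fun k : ℕ => R^(2*k+1) / (k.factorial : ℝ)) := by
  apply ((Real.summable_pow_div_factorial (R^2)).mul_left R).congr
  intro k
  rw [pow_add, pow_mul, pow_one]
  ring

lemma two_k_one_le (k : ℕ) : (2*(k:ℝ)+1) ≤ 3 * 2^k := by
  have hk : (k:ℝ) ≤ 2^k := by exact_mod_cast (Nat.lt_two_pow_self (n := k)).le
  have h1 : (1:ℝ) ≤ 2^k := one_le_pow₀ one_le_two
  linarith

lemma summable_aux2 {R : ℝ} (hR : 1 ≤ R) :
    Summable (fun k : ℕ => (2*(k:ℝ)+1) * R^(2*k) / (k.factorial : ℝ)) := by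
  have hR0 : (0:ℝ) ≤ R := by linarith
  apply Summable.of_nonneg_of_le (fun k => by positivity) ?_
    ((Real.summable_pow_div_factorial (2*R^2)).mul_left 3)
  intro k
  calc (2*(k:ℝ)+1) * R^(2*k) / (k.factorial : ℝ)
      ≤ (3 * 2^k) * R^(2*k) / (k.factorial : ℝ) := by
        gcongr
        exact two_k_one_le k
    _ = 3 * ((2*R^2)^k / (k.factorial : ℝ)) := by
        rw [mul_pow, ← pow_mul]
        ring

lemma term_conv {s : Set ℝ} {R : ℝ} (hs : ∀ z ∈ s, |z| ≤ R) (m : ℕ) {cn : ℕ → ℝ} {cl : ℝ}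
    (h : Tendsto cn atTop (𝓝 cl)) :
    TendstoUniformlyOn (fun n z => cn n * z ^ m) (fun z => cl * z ^ m) atTop s := by
  rw [Metric.tendstoUniformlyOn_iff]
  intro ε hε
  set C := max R 1 with hCdef
  have hC1 : (1:ℝ) ≤ C := le_max_right _ _
  have hCm : (0:ℝ) < C ^ m := by positivity
  have key := Metric.tendsto_nhds.mp h (ε / C^m) (by positivity)
  filter_upwards [key] with n hn z hz
  rw [Real.dist_eq]
  have h1 : |cl - cn n| < ε / C^m := by
    rw [abs_sub_comm, ← Real.dist_eq]; exact hn
  have h2 : |z|^m ≤ C^m :=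
    pow_le_pow_left₀ (abs_nonneg z) ((hs z hz).trans (le_max_left _ _)) m
  calc |cl * z^m - cn n * z^m| = |cl - cn n| * |z|^m := by
        rw [← sub_mul, abs_mul, abs_pow]
    _ ≤ |cl - cn n| * C^m := mul_le_mul_of_nonneg_left h2 (abs_nonneg _)
    _ < (ε/C^m) * C^m := mul_lt_mul_of_pos_right h1 hCm
    _ = ε := by field_simp

lemma lemB {s : Set ℝ} {f : ℕ → ℕ → ℝ → ℝ} {g : ℕ → ℝ → ℝ} {M : ℕ → ℝ}
    (hM : Summable M)
    (hf : ∀ n k, ∀ z ∈ s, |f n k z| ≤ M k) (hg : ∀ k, ∀ z ∈ s, |g k z| ≤ M k)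
    (hcv : ∀ k, TendstoUniformlyOn (fun n z => f n k z) (g k) atTop s) :
    TendstoUniformlyOn (fun n z => ∑' k, f n k z) (fun z => ∑' k, g k z) atTop s := by
  rw [Metric.tendstoUniformlyOn_iff]
  intro ε hε
  obtain ⟨K, hK⟩ : ∃ K : ℕ, ∑' k, M (k + K) < ε/4 := by
    have ht := tendsto_sum_nat_add M
    exact (ht.eventually (gt_mem_nhds (show (0:ℝ) < ε/4 by linarith))).exists
  have hδ : (0:ℝ) < ε/(4*(K+1)) := by positivity
  have hev : ∀ᶠ n in atTop, ∀ k ∈ Finset.range K, ∀ z ∈ s, dist (g k z) (f n k z) < ε/(4*(K+1)) :=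
    (eventually_all_finset _).2 fun k _ => Metric.tendstoUniformlyOn_iff.mp (hcv k) _ hδ
  filter_upwards [hev] with n hn z hz
  by_cases hzs : z ∈ s
  case neg => exact absurd hz hzs
  have Sf : Summable fun k => f n k z :=
    Summable.of_norm_bounded hM fun k => by rw [Real.norm_eq_abs]; exact hf n k z hz
  have Sg : Summable fun k => g k z :=
    Summable.of_norm_bounded hM fun k => by rw [Real.norm_eq_abs]; exact hg k z hz
  have hMK : Summable fun k => M (k + K) := (summable_nat_add_iff K).2 hM
  rw [Real.dist_eq]
  have e1 := Summable.sum_add_tsum_nat_add K Sg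
  have e2 := Summable.sum_add_tsum_nat_add K Sf
  have tailg : |∑' k, g (k + K) z| ≤ ∑' k, M (k + K) := by
    have s1 : Summable fun k => ‖g (k + K) z‖ :=
      Summable.of_nonneg_of_le (fun _ => norm_nonneg _)
        (fun k => by rw [Real.norm_eq_abs]; exact hg _ z hz) hMK
    calc |∑' k, g (k + K) z| ≤ ∑' k, ‖g (k + K) z‖ := norm_tsum_le_tsum_norm s1
      _ ≤ ∑' k, M (k + K) :=
          Summable.tsum_le_tsum (fun k => by rw [Real.norm_eq_abs]; exact hg _ z hz) s1 hMK
  have tailf : |∑' k, f n (k + K) z| ≤ ∑' k, M (k + K) := by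
    have s1 : Summable fun k => ‖f n (k + K) z‖ :=
      Summable.of_nonneg_of_le (fun _ => norm_nonneg _)
        (fun k => by rw [Real.norm_eq_abs]; exact hf n _ z hz) hMK
    calc |∑' k, f n (k + K) z| ≤ ∑' k, ‖f n (k + K) z‖ := norm_tsum_le_tsum_norm s1
      _ ≤ ∑' k, M (k + K) :=
          Summable.tsum_le_tsum (fun k => by rw [Real.norm_eq_abs]; exact hf n _ z hz) s1 hMK
  have head : |∑ k ∈ Finset.range K, (g k z - f n k z)| ≤ K * (ε/(4*(K+1))) := by
    calc |∑ k ∈ Finset.range K, (g k z - f n k z)|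
        ≤ ∑ k ∈ Finset.range K, |g k z - f n k z| := Finset.abs_sum_le_sum_abs _ _
      _ ≤ ∑ _k ∈ Finset.range K, ε/(4*(K+1)) := by
          apply Finset.sum_le_sum
          intro k hk
          have := hn k hk z hz; rw [Real.dist_eq] at this; exact this.le
      _ = K * (ε/(4*(K+1))) := by
          rw [Finset.sum_const, Finset.card_range, nsmul_eq_mul]
  have decomp : (∑' k, g k z) - (∑' k, f n k z)
      = (∑ k ∈ Finset.range K, (g k z - f n k z))
        + ((∑' k, g (k + K) z) - (∑' k, f n (k + K) z)) := by
    rw [← e1, ← e2, Finset.sum_sub_distrib]; ring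
  have hKK : (K : ℝ) * (ε/(4*(K+1))) ≤ ε/4 := by
    have hpos : (0:ℝ) < 4*((K:ℝ)+1) := by positivity
    have heq : (K:ℝ) * (ε/(4*(K+1))) = ((K:ℝ) * ε)/(4*((K:ℝ)+1)) := by ring
    rw [heq, div_le_div_iff₀ hpos (by norm_num)]
    nlinarith [mul_nonneg hε.le (Nat.cast_nonneg K : (0:ℝ) ≤ (K:ℝ))]
  calc |(∑' k, g k z) - (∑' k, f n k z)|
      = |(∑ k ∈ Finset.range K, (g k z - f n k z))
        + ((∑' k, g (k + K) z) - (∑' k, f n (k + K) z))| := by rw [decomp]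
    _ ≤ |∑ k ∈ Finset.range K, (g k z - f n k z)|
        + |(∑' k, g (k + K) z) - (∑' k, f n (k + K) z)| := abs_add_le _ _
    _ ≤ K * (ε/(4*(K+1))) + (|∑' k, g (k + K) z| + |∑' k, f n (k + K) z|) :=
        add_le_add head abs_sub_le'
    _ ≤ ε/4 + (ε/4 + ε/4) := by
        exact add_le_add hKK (add_le_add (tailg.trans hK.le) (tailf.trans hK.le))
    _ < ε := by linarith

lemma lemC {c : ℕ → ℝ} (hc : ∀ k, |c k| ≤ 1 / (k.factorial : ℝ)) {e : ℕ → ℕ}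
    (he : ∀ k, e k ≤ 2*k+1) (z : ℝ) :
    HasDerivAt (fun w => ∑' k, c k * w ^ (e k)) (∑' k, c k * (e k : ℝ) * z ^ (e k - 1)) z := by
  set R := |z| + 1 with hRdef
  have hR1 : 1 ≤ R := by rw [hRdef]; linarith [abs_nonneg z]
  have hR0 : (0:ℝ) ≤ R := by linarith
  have hzR : z ∈ Metric.ball (0:ℝ) R := by
    rw [Metric.mem_ball, dist_zero_right, Real.norm_eq_abs]; linarith
  have hwR : ∀ w ∈ Metric.ball (0:ℝ) R, |w| ≤ R := fun w hw => by
    rw [Metric.mem_ball, dist_zero_right, Real.norm_eq_abs] at hw; linarith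
  have bound1 : ∀ (k : ℕ) (w : ℝ), |w| ≤ R → |c k * w ^ (e k)| ≤ R^(2*k+1) / (k.factorial : ℝ) := by
    intro k w hw
    rw [abs_mul, abs_pow]
    calc |c k| * |w| ^ (e k) ≤ (1 / (k.factorial : ℝ)) * R^(2*k+1) := by
          apply mul_le_mul (hc k) ?_ (by positivity) (by positivity)
          calc |w| ^ (e k) ≤ R ^ (e k) := pow_le_pow_left₀ (abs_nonneg w) hw _
            _ ≤ R^(2*k+1) := pow_le_pow_right₀ hR1 (he k)
      _ = R^(2*k+1) / (k.factorial : ℝ) := by ring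
  apply hasDerivAt_of_tendstoUniformlyOn (l := (atTop : Filter ℕ)) Metric.isOpen_ball
    (f := fun N w => ∑ k ∈ Finset.range N, c k * w ^ (e k))
    (f' := fun N w => ∑ k ∈ Finset.range N, c k * (e k : ℝ) * w ^ (e k - 1)) ?hf' ?hf ?hfg hzR
  case hf' =>
    apply tendstoUniformlyOn_tsum_nat (u := fun k => (2*(k:ℝ)+1) * R^(2*k) / (k.factorial : ℝ))
      (summable_aux2 hR1)
    intro k w hw
    rw [Real.norm_eq_abs, abs_mul, abs_mul, abs_pow]
    have h1 : |(e k : ℝ)| ≤ 2*(k:ℝ)+1 := by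
      rw [abs_of_nonneg (by positivity)]
      exact_mod_cast he k
    have h2 : |w| ^ (e k - 1) ≤ R^(2*k) := by
      calc |w| ^ (e k - 1) ≤ R ^ (e k - 1) := pow_le_pow_left₀ (abs_nonneg w) (hwR w hw) _
        _ ≤ R^(2*k) := pow_le_pow_right₀ hR1 (by have := he k; omega)
    calc |c k| * |(e k : ℝ)| * |w| ^ (e k - 1)
        ≤ (1 / (k.factorial : ℝ)) * (2*(k:ℝ)+1) * R^(2*k) := by
          apply mul_le_mul (mul_le_mul (hc k) h1 (abs_nonneg _) (by positivity)) h2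
            (by positivity) (by positivity)
      _ = (2*(k:ℝ)+1) * R^(2*k) / (k.factorial : ℝ) := by ring
  case hf =>
    apply Eventually.of_forall
    intro N w _
    apply HasDerivAt.fun_sum
    intro k _
    have h := (hasDerivAt_pow (e k) w).const_mul (c k)
    simpa [mul_assoc] using h
  case hfg =>
    intro w hw
    have S : Summable fun k => c k * w ^ (e k) :=
      Summable.of_norm_bounded (summable_aux1 hR1) fun k => by
        rw [Real.norm_eq_abs]; exact bound1 k w (hwR w hw)
    exact S.hasSum.tendsto_sum_nat

lemma master {a b : ℝ} {c : ℕ → ℕ → ℝ} {cl : ℕ → ℝ}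
    (hb : ∀ n k, |c n k| ≤ 1 / (k.factorial:ℝ)) (hbl : ∀ k, |cl k| ≤ 1 / (k.factorial:ℝ))
    (hcv : ∀ k, Tendsto (fun n => c n k) atTop (𝓝 (cl k))) {e : ℕ → ℕ}
    (he : ∀ k, e k ≤ 2*k+1) :
    TendstoUniformlyOn (fun n z => ∑' k, c n k * z^(e k)) (fun z => ∑' k, cl k * z^(e k))
      atTop (Set.Icc a b) ∧
    TendstoUniformlyOn (fun n z => deriv (fun w => ∑' k, c n k * w^(e k)) z)
      (deriv (fun w => ∑' k, cl k * w^(e k))) atTop (Set.Icc a b) := by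
  set R := max |a| |b| + 1 with hRdef
  have hmax0 : (0:ℝ) ≤ max |a| |b| := le_trans (abs_nonneg a) (le_max_left _ _)
  have hR1 : 1 ≤ R := by rw [hRdef]; linarith
  have hzR : ∀ z ∈ Set.Icc a b, |z| ≤ R := fun z hz => by
    have := abs_le_max_abs_abs hz.1 hz.2; rw [hRdef]; linarith
  have bound1 : ∀ (d : ℝ) (k : ℕ) (z : ℝ), |d| ≤ 1/(k.factorial:ℝ) → z ∈ Set.Icc a b →
      |d * z ^ (e k)| ≤ R^(2*k+1) / (k.factorial : ℝ) := by
    intro d k z hd hz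
    rw [abs_mul, abs_pow]
    calc |d| * |z| ^ (e k) ≤ (1 / (k.factorial : ℝ)) * R^(2*k+1) := by
          apply mul_le_mul hd ?_ (by positivity) (by positivity)
          calc |z| ^ (e k) ≤ R ^ (e k) := pow_le_pow_left₀ (abs_nonneg z) (hzR z hz) _
            _ ≤ R^(2*k+1) := pow_le_pow_right₀ hR1 (he k)
      _ = R^(2*k+1) / (k.factorial : ℝ) := by ring
  have bound2 : ∀ (d : ℝ) (k : ℕ) (z : ℝ), |d| ≤ 1/(k.factorial:ℝ) → z ∈ Set.Icc a b →
      |d * (e k : ℝ) * z ^ (e k - 1)| ≤ (2*(k:ℝ)+1) * R^(2*k) / (k.factorial : ℝ) := by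
    intro d k z hd hz
    rw [abs_mul, abs_mul, abs_pow]
    have h1 : |(e k : ℝ)| ≤ 2*(k:ℝ)+1 := by
      rw [abs_of_nonneg (by positivity)]
      exact_mod_cast he k
    have h2 : |z| ^ (e k - 1) ≤ R^(2*k) := by
      calc |z| ^ (e k - 1) ≤ R ^ (e k - 1) := pow_le_pow_left₀ (abs_nonneg z) (hzR z hz) _
        _ ≤ R^(2*k) := pow_le_pow_right₀ hR1 (by have := he k; omega)
    calc |d| * |(e k : ℝ)| * |z| ^ (e k - 1)
        ≤ (1 / (k.factorial : ℝ)) * (2*(k:ℝ)+1) * R^(2*k) := by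
          apply mul_le_mul (mul_le_mul hd h1 (abs_nonneg _) (by positivity)) h2
            (by positivity) (by positivity)
      _ = (2*(k:ℝ)+1) * R^(2*k) / (k.factorial : ℝ) := by ring
  constructor
  · apply lemB (summable_aux1 hR1)
    · intro n k z hz; exact bound1 _ k z (hb n k) hz
    · intro k z hz; exact bound1 _ k z (hbl k) hz
    · intro k; exact term_conv hzR (e k) (hcv k)
  · have hD : ∀ (d : ℕ → ℝ), (∀ k, |d k| ≤ 1/(k.factorial:ℝ)) →
        deriv (fun w => ∑' k, d k * w^(e k)) = fun z => ∑' k, d k * (e k:ℝ) * z^(e k - 1) :=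
      fun d hd => funext fun z => (lemC hd he z).deriv
    rw [hD cl hbl]
    have heq : (fun n z => deriv (fun w => ∑' k, c n k * w^(e k)) z)
        = fun n z => ∑' k, c n k * (e k:ℝ) * z^(e k - 1) := by
      funext n z; rw [hD (c n) (hb n)]
    rw [heq]
    apply lemB (summable_aux2 hR1)
    · intro n k z hz; exact bound2 _ k z (hb n k) hz
    · intro k z hz; exact bound2 _ k z (hbl k) hz
    · intro k
      have ht : Tendsto (fun n => c n k * (e k : ℝ)) atTop (𝓝 (cl k * (e k : ℝ))) :=
        (hcv k).mul_const _
      exact term_conv hzR (e k - 1) ht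

lemma mem01 : (1:ℝ) ∈ Set.Icc (0:ℝ) 1 := ⟨zero_le_one, le_rfl⟩

lemma coef_sp_bound (ν : Measure ℝ) [IsProbabilityMeasure ν] [NullSingletonClass ν] (k : ℕ) :
    |pIter ν (2*k+1) 1| ≤ 1/(k.factorial:ℝ) := by
  rw [pIter_odd ν k 1 mem01, abs_of_nonneg (TIter_nonneg ν (niceF ν) k 1)]
  have := TIter_bound ν (niceF ν) (fun s _ => distF_le_one ν s) k 1 mem01
  simpa using this

lemma coef_cq_bound (ν : Measure ℝ) [IsProbabilityMeasure ν] [NullSingletonClass ν] (k : ℕ) :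
    |qIter ν (2*k) 1| ≤ 1/(k.factorial:ℝ) := by
  rw [qIter_even ν k 1 mem01, abs_of_nonneg (TIter_nonneg ν niceOne k 1)]
  have := TIter_bound ν niceOne (fun s _ => le_rfl) k 1 mem01
  simpa using this

lemma integral_TIter_bound (ν : Measure ℝ) [IsProbabilityMeasure ν] {g : ℝ → ℝ} (hg : Nice g)
    (hg1 : ∀ s ∈ Set.Icc (0:ℝ) 1, g s ≤ 1) (k : ℕ) :
    |∫ s in Set.Ioc (0:ℝ) 1, TIter ν g k s| ≤ 1/((k+1).factorial:ℝ) := by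
  rw [abs_of_nonneg (setIntegral_nonneg measurableSet_Ioc fun s _ => TIter_nonneg ν hg k s)]
  have mono : (∫ s in Set.Ioc (0:ℝ) 1, TIter ν g k s)
      ≤ ∫ s in Set.Ioc (0:ℝ) 1, s^k / (k.factorial:ℝ) := by
    apply setIntegral_mono_on
      ((nice_TIter ν hg k).integrableOn volume (by simp [measure_Ioc_lt_top.ne]))
      (((continuous_pow k).div_const _).integrableOn_Ioc) measurableSet_Ioc
    intro s hs
    exact TIter_bound ν hg hg1 k s ⟨hs.1.le, hs.2⟩
  refine mono.trans ?_
  rw [setIntegral_pow_div k zero_le_one, one_pow]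

lemma coef_cp_bound (ν : Measure ℝ) [IsProbabilityMeasure ν] [NullSingletonClass ν] (k : ℕ) :
    |pIter ν (2*k) 1| ≤ 1/(k.factorial:ℝ) := by
  cases k with
  | zero => show |(1:ℝ)| ≤ _; norm_num
  | succ k =>
    rw [pIter_even ν k]
    exact integral_TIter_bound ν (niceF ν) (fun s _ => distF_le_one ν s) k

lemma coef_sq_bound (ν : Measure ℝ) [IsProbabilityMeasure ν] [NullSingletonClass ν] (k : ℕ) :
    |qIter ν (2*k+1) 1| ≤ 1/(k.factorial:ℝ) := by
  rw [qIter_odd ν k]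
  refine (integral_TIter_bound ν niceOne (fun s _ => le_rfl) k).trans ?_
  apply one_div_le_one_div_of_le (by exact_mod_cast k.factorial_pos)
  exact_mod_cast Nat.factorial_le (Nat.le_succ k)

lemma unifOne : TendstoUniformlyOn (fun (_ : ℕ) (_ : ℝ) => (1:ℝ)) (fun _ => (1:ℝ)) atTop
    (Set.Icc (0:ℝ) 1) := by
  rw [Metric.tendstoUniformlyOn_iff]
  intro ε hε
  filter_upwards with n z _
  simpa using hε

lemma sinp_eq (ν : Measure ℝ) :
    sinpF ν = fun z => ∑' k, ((-1:ℝ)^k * pIter ν (2*k+1) 1) * z^(2*k+1) := by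
  funext z; exact tsum_congr fun k => by ring

lemma sinq_eq (ν : Measure ℝ) :
    sinqF ν = fun z => ∑' k, ((-1:ℝ)^k * qIter ν (2*k+1) 1) * z^(2*k+1) := by
  funext z; exact tsum_congr fun k => by ring

lemma cosp_eq (ν : Measure ℝ) :
    cospF ν = fun z => ∑' k, ((-1:ℝ)^k * pIter ν (2*k) 1) * z^(2*k) := by
  funext z; exact tsum_congr fun k => by ring

lemma cosq_eq (ν : Measure ℝ) :
    cosqF ν = fun z => ∑' k, ((-1:ℝ)^k * qIter ν (2*k) 1) * z^(2*k) := by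
  funext z; exact tsum_congr fun k => by ring

section Conv

variable {μ : Measure ℝ} {μs : ℕ → Measure ℝ}
  [IsProbabilityMeasure μ] [NullSingletonClass μ]
  (hprob : ∀ n, IsProbabilityMeasure (μs n)) (hatom : ∀ n, NullSingletonClass (μs n))
  (hconv : TendstoUniformlyOn (fun n x => distF (μs n) x) (distF μ) atTop
      (Set.Icc (0:ℝ) 1))

include hprob hconv

lemma unifP (k : ℕ) : TendstoUniformlyOn (fun n x => TIter (μs n) (distF (μs n)) k x)
    (TIter μ (distF μ) k) atTop (Set.Icc (0:ℝ) 1) :=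
  unifTIter hprob (niceF μ) (fun n => by haveI := hprob n; exact niceF (μs n))
    (fun s _ => distF_le_one μ s) hconv hconv k

lemma unifQ (k : ℕ) : TendstoUniformlyOn (fun n x => TIter (μs n) (fun _ => (1:ℝ)) k x)
    (TIter μ (fun _ => (1:ℝ)) k) atTop (Set.Icc (0:ℝ) 1) :=
  unifTIter hprob niceOne (fun _ => niceOne) (fun s _ => le_rfl) hconv unifOne k

include hatom

lemma conv_sp (k : ℕ) : Tendsto (fun n => pIter (μs n) (2*k+1) 1) atTop
    (𝓝 (pIter μ (2*k+1) 1)) := by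
  rw [pIter_odd μ k 1 mem01]
  apply ((unifP hprob hconv k).tendsto_at mem01).congr
  intro n; haveI := hprob n; haveI := hatom n
  exact (pIter_odd (μs n) k 1 mem01).symm

lemma conv_cq (k : ℕ) : Tendsto (fun n => qIter (μs n) (2*k) 1) atTop
    (𝓝 (qIter μ (2*k) 1)) := by
  rw [qIter_even μ k 1 mem01]
  apply ((unifQ hprob hconv k).tendsto_at mem01).congr
  intro n; haveI := hprob n; haveI := hatom n
  exact (qIter_even (μs n) k 1 mem01).symm

lemma conv_cp (k : ℕ) : Tendsto (fun n => pIter (μs n) (2*k) 1) atTop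
    (𝓝 (pIter μ (2*k) 1)) := by
  cases k with
  | zero => exact tendsto_const_nhds
  | succ k =>
    rw [pIter_even μ k]
    have ht := tendsto_setIntegral_of_unif (nice_TIter μ (niceF μ) k)
      (fun n => by haveI := hprob n; exact nice_TIter (μs n) (niceF (μs n)) k)
      (unifP hprob hconv k)
    apply ht.congr
    intro n; haveI := hprob n; haveI := hatom n
    exact (pIter_even (μs n) k).symm

lemma conv_sq (k : ℕ) : Tendsto (fun n => qIter (μs n) (2*k+1) 1) atTop
    (𝓝 (qIter μ (2*k+1) 1)) := by
  rw [qIter_odd μ k]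
  have ht := tendsto_setIntegral_of_unif (nice_TIter μ niceOne k)
    (fun n => by haveI := hprob n; exact nice_TIter (μs n) niceOne k)
    (unifQ hprob hconv k)
  apply ht.congr
  intro n; haveI := hprob n; haveI := hatom n
  exact (qIter_odd (μs n) k).symm

end Conv


end AuxProof

/-- Proposition 3.5: if the distribution functions `F_n` converge uniformly on `[0,1]`
to `F`, then `sinp_n, sinq_n, cosp_n, cosq_n` and their derivatives converge to
`sinp, sinq, cosp, cosq` and their derivatives, uniformly on every bounded interval. -/
theorem stmt12 (μ : Measure ℝ) (μs : ℕ → Measure ℝ)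
    [IsProbabilityMeasure μ] [NullSingletonClass μ]
    (hprob : ∀ n, IsProbabilityMeasure (μs n)) (hatom : ∀ n, NullSingletonClass (μs n))
    (hsupp : μ (Set.Icc (0:ℝ) 1)ᶜ = 0) (hsupps : ∀ n, μs n (Set.Icc (0:ℝ) 1)ᶜ = 0)
    (hconv : TendstoUniformlyOn (fun n x => distF (μs n) x) (distF μ) atTop
      (Set.Icc (0:ℝ) 1)) :
    ∀ a b : ℝ,
      TendstoUniformlyOn (fun n z => sinpF (μs n) z) (sinpF μ) atTop (Set.Icc a b) ∧
      TendstoUniformlyOn (fun n z => sinqF (μs n) z) (sinqF μ) atTop (Set.Icc a b) ∧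
      TendstoUniformlyOn (fun n z => cospF (μs n) z) (cospF μ) atTop (Set.Icc a b) ∧
      TendstoUniformlyOn (fun n z => cosqF (μs n) z) (cosqF μ) atTop (Set.Icc a b) ∧
      TendstoUniformlyOn (fun n z => deriv (sinpF (μs n)) z) (deriv (sinpF μ)) atTop
        (Set.Icc a b) ∧
      TendstoUniformlyOn (fun n z => deriv (sinqF (μs n)) z) (deriv (sinqF μ)) atTop
        (Set.Icc a b) ∧
      TendstoUniformlyOn (fun n z => deriv (cospF (μs n)) z) (deriv (cospF μ)) atTop
        (Set.Icc a b) ∧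
      TendstoUniformlyOn (fun n z => deriv (cosqF (μs n)) z) (deriv (cosqF μ)) atTop
        (Set.Icc a b) := by
  
  intro a b
  have Hsp := master (a := a) (b := b)
    (c := fun n k => (-1:ℝ)^k * pIter (μs n) (2*k+1) 1)
    (cl := fun k => (-1:ℝ)^k * pIter μ (2*k+1) 1)
    (fun n k => by
      haveI := hprob n; haveI := hatom n
      rw [abs_mul, abs_pow, abs_neg, abs_one, one_pow, one_mul]
      exact coef_sp_bound (μs n) k)
    (fun k => by
      rw [abs_mul, abs_pow, abs_neg, abs_one, one_pow, one_mul]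
      exact coef_sp_bound μ k)
    (fun k => (conv_sp hprob hatom hconv k).const_mul _)
    (e := fun k => 2*k+1) (fun k => le_rfl)
  have Hsq := master (a := a) (b := b)
    (c := fun n k => (-1:ℝ)^k * qIter (μs n) (2*k+1) 1)
    (cl := fun k => (-1:ℝ)^k * qIter μ (2*k+1) 1)
    (fun n k => by
      haveI := hprob n; haveI := hatom n
      rw [abs_mul, abs_pow, abs_neg, abs_one, one_pow, one_mul]
      exact coef_sq_bound (μs n) k)
    (fun k => by
      rw [abs_mul, abs_pow, abs_neg, abs_one, one_pow, one_mul]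
      exact coef_sq_bound μ k)
    (fun k => (conv_sq hprob hatom hconv k).const_mul _)
    (e := fun k => 2*k+1) (fun k => le_rfl)
  have Hcp := master (a := a) (b := b)
    (c := fun n k => (-1:ℝ)^k * pIter (μs n) (2*k) 1)
    (cl := fun k => (-1:ℝ)^k * pIter μ (2*k) 1)
    (fun n k => by
      haveI := hprob n; haveI := hatom n
      rw [abs_mul, abs_pow, abs_neg, abs_one, one_pow, one_mul]
      exact coef_cp_bound (μs n) k)
    (fun k => by
      rw [abs_mul, abs_pow, abs_neg, abs_one, one_pow, one_mul]
      exact coef_cp_bound μ k)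
    (fun k => (conv_cp hprob hatom hconv k).const_mul _)
    (e := fun k => 2*k) (fun k => Nat.le_succ _)
  have Hcq := master (a := a) (b := b)
    (c := fun n k => (-1:ℝ)^k * qIter (μs n) (2*k) 1)
    (cl := fun k => (-1:ℝ)^k * qIter μ (2*k) 1)
    (fun n k => by
      haveI := hprob n; haveI := hatom n
      rw [abs_mul, abs_pow, abs_neg, abs_one, one_pow, one_mul]
      exact coef_cq_bound (μs n) k)
    (fun k => by
      rw [abs_mul, abs_pow, abs_neg, abs_one, one_pow, one_mul]
      exact coef_cq_bound μ k)
    (fun k => (conv_cq hprob hatom hconv k).const_mul _)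
    (e := fun k => 2*k) (fun k => Nat.le_succ _)
  refine ⟨?_, ?_, ?_, ?_, ?_, ?_, ?_, ?_⟩
  · simp only [sinp_eq]; exact Hsp.1
  · simp only [sinq_eq]; exact Hsq.1
  · simp only [cosp_eq]; exact Hcp.1
  · simp only [cosq_eq]; exact Hcq.1
  · simp only [sinp_eq]; exact Hsp.2
  · simp only [sinq_eq]; exact Hsq.2
  · simp only [cosp_eq]; exact Hcp.2
  · simp only [cosq_eq]; exact Hcq.2
end

section
/- Let f : ℝ → ℝ be continuously differentiable and let (f_n)_{n∈ℕ} be continuously differentiable functions on ℝ such that f_n → f and f_n' → f' uniformly on bounded intervals. Suppose −∞ < a < b < ∞, f has exactly one zero x in [a,b] and this zero lies in the open interval (a,b), and f' has no zero on [a,b]. Then there exists n₀ ∈ ℕ such that for all n ≥ n₀ the function f_n has exactly one zero in [a,b]. -/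
open Filter

lemma negTU13 {F : ℕ → ℝ → ℝ} {g : ℝ → ℝ} {s : Set ℝ}
    (h : TendstoUniformlyOn F g atTop s) :
    TendstoUniformlyOn (fun n x => -(F n x)) (fun x => -g x) atTop s := by
  rw [Metric.tendstoUniformlyOn_iff] at h ⊢
  intro ε hε
  filter_upwards [h ε hε] with n hn x hx
  simpa [Real.dist_eq, abs_sub_comm, neg_sub_neg] using hn x hx

lemma aux13 (a b : ℝ) (hab : a < b) (f : ℝ → ℝ) (fs : ℕ → ℝ → ℝ)
    (hf : ContDiff ℝ 1 f) (hfs : ∀ n, ContDiff ℝ 1 (fs n))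
    (hconv : TendstoUniformlyOn (fun n x => fs n x) f atTop (Set.Icc a b))
    (hconv' : TendstoUniformlyOn (fun n x => deriv (fs n) x) (deriv f) atTop (Set.Icc a b))
    (x : ℝ) (hx : x ∈ Set.Ioo a b) (hfx : f x = 0)
    (hpos : ∀ y ∈ Set.Icc a b, 0 < deriv f y) :
    ∃ n₀ : ℕ, ∀ n ≥ n₀, ∃! y, y ∈ Set.Icc a b ∧ fs n y = 0 := by
  have hxmem : x ∈ Set.Icc a b := ⟨hx.1.le, hx.2.le⟩
  have hamem : a ∈ Set.Icc a b := Set.left_mem_Icc.2 hab.le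
  have hbmem : b ∈ Set.Icc a b := Set.right_mem_Icc.2 hab.le
  have hmono : StrictMonoOn f (Set.Icc a b) :=
    strictMonoOn_of_deriv_pos (convex_Icc a b) hf.continuous.continuousOn
      (fun y hy => hpos y (by rw [interior_Icc] at hy; exact Set.mem_Icc_of_Ioo hy))
  have hfa : f a < 0 := hfx ▸ hmono hamem hxmem hx.1
  have hfb : 0 < f b := hfx ▸ hmono hxmem hbmem hx.2
  have hderivcont : ContinuousOn (deriv f) (Set.Icc a b) :=
    (hf.continuous_deriv le_rfl).continuousOn
  obtain ⟨y0, hy0, hmin⟩ := isCompact_Icc.exists_isMinOn ⟨a, hamem⟩ hderivcont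
  have hm : 0 < deriv f y0 := hpos y0 hy0
  have h1 := (Metric.tendstoUniformlyOn_iff.1 hconv') (deriv f y0) hm
  have h2 := (Metric.tendstoUniformlyOn_iff.1 hconv) (min (-f a) (f b))
    (lt_min (by linarith) hfb)
  rw [eventually_atTop] at h1 h2
  obtain ⟨n₁, hn₁⟩ := h1
  obtain ⟨n₂, hn₂⟩ := h2
  refine ⟨max n₁ n₂, fun n hn => ?_⟩
  have H1 := hn₁ n (le_trans (le_max_left _ _) hn)
  have H2 := hn₂ n (le_trans (le_max_right _ _) hn)
  have hderivpos : ∀ y ∈ Set.Icc a b, 0 < deriv (fs n) y := by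
    intro y hy
    have h := H1 y hy
    rw [Real.dist_eq, abs_lt] at h
    have : deriv f y0 ≤ deriv f y := hmin hy
    linarith
  have hmono' : StrictMonoOn (fs n) (Set.Icc a b) :=
    strictMonoOn_of_deriv_pos (convex_Icc a b) (hfs n).continuous.continuousOn
      (fun y hy => hderivpos y (by rw [interior_Icc] at hy; exact Set.mem_Icc_of_Ioo hy))
  have ha' : fs n a < 0 := by
    have h := H2 a hamem
    rw [Real.dist_eq, abs_lt] at h
    have := min_le_left (-f a) (f b)
    linarith
  have hb' : 0 < fs n b := by
    have h := H2 b hbmem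
    rw [Real.dist_eq, abs_lt] at h
    have := min_le_right (-f a) (f b)
    linarith
  obtain ⟨y, hy, hy0⟩ := intermediate_value_Icc hab.le (hfs n).continuous.continuousOn
    (Set.mem_Icc.2 ⟨ha'.le, hb'.le⟩)
  exact ⟨y, ⟨hy, hy0⟩, fun z hz => hmono'.injOn hz.1 hy (by rw [hz.2, hy0])⟩

/-- Lemma 3.6: if `f` is `C¹`, `f_n` are `C¹` with `f_n → f` and `f_n' → f'` uniformly
on bounded intervals, `f` has exactly one zero `x` in `[a,b]` which lies in `(a,b)`,
and `f'` has no zero on `[a,b]`, then for all large `n` the function `f_n` has exactly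
one zero in `[a,b]`. -/
theorem stmt13 (f : ℝ → ℝ) (fs : ℕ → ℝ → ℝ)
    (hf : ContDiff ℝ 1 f) (hfs : ∀ n, ContDiff ℝ 1 (fs n))
    (hconv : ∀ a b : ℝ, TendstoUniformlyOn (fun n x => fs n x) f atTop (Set.Icc a b))
    (hconv' : ∀ a b : ℝ,
      TendstoUniformlyOn (fun n x => deriv (fs n) x) (deriv f) atTop (Set.Icc a b))
    (a b : ℝ) (hab : a < b)
    (x : ℝ) (hx : x ∈ Set.Ioo a b) (hfx : f x = 0)
    (huniq : ∀ y ∈ Set.Icc a b, f y = 0 → y = x)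
    (hf' : ∀ y ∈ Set.Icc a b, deriv f y ≠ 0) :
    ∃ n₀ : ℕ, ∀ n ≥ n₀, ∃! y, y ∈ Set.Icc a b ∧ fs n y = 0 := by
  have hxmem : x ∈ Set.Icc a b := ⟨hx.1.le, hx.2.le⟩
  have hderivcont : ContinuousOn (deriv f) (Set.Icc a b) :=
    (hf.continuous_deriv le_rfl).continuousOn
  have key : (∀ y ∈ Set.Icc a b, 0 < deriv f y) ∨ (∀ y ∈ Set.Icc a b, deriv f y < 0) := by
    rcases (hf' x hxmem).lt_or_gt with h | h
    · right
      intro y hy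
      rcases (hf' y hy).lt_or_gt with h' | h'
      · exact h'
      · exfalso
        have hsub : Set.uIcc x y ⊆ Set.Icc a b :=
          (Set.ordConnected_Icc).uIcc_subset hxmem hy
        obtain ⟨z, hz, hz0⟩ := intermediate_value_uIcc (hderivcont.mono hsub)
          (Set.mem_uIcc.2 (Or.inl ⟨h.le, h'.le⟩))
        exact hf' z (hsub hz) hz0
    · left
      intro y hy
      rcases (hf' y hy).lt_or_gt with h' | h'
      · exfalso
        have hsub : Set.uIcc y x ⊆ Set.Icc a b :=
          (Set.ordConnected_Icc).uIcc_subset hy hxmem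
        obtain ⟨z, hz, hz0⟩ := intermediate_value_uIcc (hderivcont.mono hsub)
          (Set.mem_uIcc.2 (Or.inl ⟨h'.le, h.le⟩))
        exact hf' z (hsub hz) hz0
      · exact h'
  rcases key with hpos | hneg
  · exact aux13 a b hab f fs hf hfs (hconv a b) (hconv' a b) x hx hfx hpos
  · have hd : (deriv fun y => -f y) = fun y => -deriv f y := funext fun y => deriv.neg
    have hd' : ∀ n, (deriv fun y => -fs n y) = fun y => -deriv (fs n) y :=
      fun n => funext fun y => deriv.neg
    have := aux13 a b hab (fun y => -f y) (fun n y => -fs n y) hf.neg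
      (fun n => (hfs n).neg)
      (negTU13 (hconv a b))
      (by
        simp only [hd, hd']
        exact negTU13 (hconv' a b))
      x hx (by simp [hfx])
      (by intro y hy; rw [hd]; simpa using hneg y hy)
    obtain ⟨n₀, hn₀⟩ := this
    refine ⟨n₀, fun n hn => ?_⟩
    obtain ⟨y, hy, hy'⟩ := hn₀ n hn
    exact ⟨y, ⟨hy.1, by simpa using hy.2⟩, fun z hz => hy' z ⟨hz.1, by simp [hz.2]⟩⟩
end

section
/- Let 0 < w₁ ≤ w₂ with w₁ + w₂ = 1 and let μ_n^w be the n-th approximating measure of the weighted Cantor measure. Then the distribution functions F_n(t) = μ_n^w([0,t]) satisfy sup_{t∈[0,1]} |F_n(t) − F_{n+1}(t)| ≤ w₂^n for all n ∈ ℕ. -/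
open MeasureTheory Real Filter

open scoped ENNReal

/-- Left endpoint of the interval `I_x = S_{x₁} ∘ ⋯ ∘ S_{x_n}([0,1])`, where
`S₁(y) = y/3` (digit `false`) and `S₂(y) = y/3 + 2/3` (digit `true`). -/
noncomputable def cantorLeft {n : ℕ} (x : Fin n → Bool) : ℝ :=
  ∑ i : Fin n, (if x i then (2:ℝ) else 0) / 3 ^ ((i : ℕ) + 1)

/-- The interval `I_x` of level `n`. -/
noncomputable def cantorInterval {n : ℕ} (x : Fin n → Bool) : Set ℝ :=
  Set.Icc (cantorLeft x) (cantorLeft x + (1/3 : ℝ)^n)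

/-- The weight `∏_{i=1}^n w_{x_i}` of the word `x`. -/
noncomputable def cantorWt (w₁ w₂ : ℝ) {n : ℕ} (x : Fin n → Bool) : ℝ :=
  ∏ i : Fin n, (if x i then w₂ else w₁)

/-- The `n`-th approximating measure `μ_n^w` of the weighted Cantor measure:
`μ_n^w(A) = 3^n ∑_{x ∈ {1,2}^n} λ¹(A ∩ I_x) ∏_{i=1}^n w_{x_i}`. -/
noncomputable def cantorApprox (w₁ w₂ : ℝ) (n : ℕ) : Measure ℝ :=
  (3 : ℝ≥0∞) ^ n • ∑ x : Fin n → Bool,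
    ENNReal.ofReal (cantorWt w₁ w₂ x) • volume.restrict (cantorInterval x)

lemma cantorLeft_nonneg {n : ℕ} (x : Fin n → Bool) : 0 ≤ cantorLeft x := by
  apply Finset.sum_nonneg; intro i _; positivity

lemma cantorLeft_cons {n : ℕ} (b : Bool) (x : Fin n → Bool) :
    cantorLeft (Fin.cons b x) = (if b then (2:ℝ) else 0) / 3 + cantorLeft x / 3 := by
  unfold cantorLeft
  rw [Fin.sum_univ_succ, Finset.sum_div]
  simp only [Fin.cons_zero, Fin.cons_succ, Fin.val_succ, pow_one]
  congr 1
  · norm_num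
  apply Finset.sum_congr rfl; intro i _
  rw [div_div, ← pow_succ]

lemma cantorLeft_le {n : ℕ} (x : Fin n → Bool) : cantorLeft x + (1/3:ℝ)^n ≤ 1 := by
  induction n with
  | zero => simp [cantorLeft]
  | succ n ih =>
    rw [← Fin.cons_self_tail x, cantorLeft_cons]
    have h := ih (Fin.tail x)
    have hb : (if x 0 then (2:ℝ) else 0) ≤ 2 := by split <;> norm_num
    have hp : (1/3:ℝ)^(n+1) = (1/3)^n/3 := by ring
    rw [hp]; linarith

lemma cantor_sep : ∀ {n : ℕ} (x y : Fin n → Bool), x ≠ y →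
    (1/3:ℝ)^n ≤ |cantorLeft x - cantorLeft y| := by
  intro n
  induction n with
  | zero => intro x y hxy; exact absurd (funext fun i => i.elim0) hxy
  | succ n ih =>
    intro x y hxy
    rw [← Fin.cons_self_tail x, ← Fin.cons_self_tail y, cantorLeft_cons, cantorLeft_cons]
    have hp : (1/3:ℝ)^(n+1) = (1/3)^n/3 := by ring
    by_cases h0 : x 0 = y 0
    · have ht : Fin.tail x ≠ Fin.tail y := by
        intro h; apply hxy; funext i
        refine Fin.cases h0 (fun j => congrFun h j) i
      have hsep := ih (Fin.tail x) (Fin.tail y) ht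
      rw [h0, add_sub_add_left_eq_sub, div_sub_div_same, abs_div]
      rw [show |(3:ℝ)| = 3 by norm_num, hp]
      linarith
    · have hx2 := cantorLeft_le (Fin.tail x)
      have hy2 := cantorLeft_le (Fin.tail y)
      have hx1 := cantorLeft_nonneg (Fin.tail x)
      have hy1 := cantorLeft_nonneg (Fin.tail y)
      have hpn : (0:ℝ) < (1/3)^n := by positivity
      rcases Bool.eq_false_or_eq_true (x 0) with hx | hx <;>
        rcases Bool.eq_false_or_eq_true (y 0) with hy | hy
      · exact absurd (hx.trans hy.symm) h0
      · simp only [hx, hy]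
        norm_num
        refine le_abs.mpr (Or.inl ?_)
        rw [hp]; linarith
      · simp only [hx, hy]
        norm_num
        refine le_abs.mpr (Or.inr ?_)
        rw [hp]; linarith
      · exact absurd (hx.trans hy.symm) h0

lemma cantorLeft_snoc {n : ℕ} (x : Fin n → Bool) (b : Bool) :
    cantorLeft (Fin.snoc x b) = cantorLeft x + (if b then (2:ℝ) else 0) / 3 ^ (n+1) := by
  unfold cantorLeft
  rw [Fin.sum_univ_castSucc]
  simp [Fin.snoc_castSucc, Fin.snoc_last]

lemma cantorWt_snoc (w₁ w₂ : ℝ) {n : ℕ} (x : Fin n → Bool) (b : Bool) :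
    cantorWt w₁ w₂ (Fin.snoc x b) = cantorWt w₁ w₂ x * (if b then w₂ else w₁) := by
  unfold cantorWt
  rw [Fin.prod_univ_castSucc]
  simp [Fin.snoc_castSucc, Fin.snoc_last]

lemma cantorWt_nonneg {w₁ w₂ : ℝ} (h1 : 0 ≤ w₁) (h2 : 0 ≤ w₂) {n : ℕ} (x : Fin n → Bool) :
    0 ≤ cantorWt w₁ w₂ x := by
  apply Finset.prod_nonneg; intro i _; split <;> assumption

lemma cantorWt_le {w₁ w₂ : ℝ} (h1 : 0 ≤ w₁) (hw : w₁ ≤ w₂) {n : ℕ} (x : Fin n → Bool) :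
    cantorWt w₁ w₂ x ≤ w₂ ^ n := by
  have : cantorWt w₁ w₂ x ≤ ∏ _i : Fin n, w₂ := by
    apply Finset.prod_le_prod
    · intro i _; split <;> [exact h1.trans hw; exact h1]
    · intro i _; split <;> [exact le_refl _; exact hw]
  simpa using this

noncomputable def gClamp (n : ℕ) (L t : ℝ) : ℝ :=
  3^n * max (min t (L + (1/3)^n) - L) 0

lemma gClamp_nonneg (n : ℕ) (L t : ℝ) : 0 ≤ gClamp n L t := by
  unfold gClamp; positivity

lemma gClamp_le_one (n : ℕ) (L t : ℝ) : gClamp n L t ≤ 1 := by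
  unfold gClamp
  have h1 : max (min t (L + (1/3:ℝ)^n) - L) 0 ≤ (1/3)^n := by
    apply max_le _ (by positivity)
    have := min_le_right t (L + (1/3:ℝ)^n)
    linarith
  calc (3:ℝ)^n * max (min t (L + (1/3)^n) - L) 0 ≤ 3^n * (1/3)^n := by
        apply mul_le_mul_of_nonneg_left h1 (by positivity)
    _ = 1 := by rw [← mul_pow]; norm_num

lemma gClamp_eq_zero {n : ℕ} {L t : ℝ} (h : t ≤ L) : gClamp n L t = 0 := by
  unfold gClamp
  have h1 : min t (L + (1/3:ℝ)^n) - L ≤ 0 := by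
    have := min_le_left t (L + (1/3:ℝ)^n); linarith
  rw [max_eq_right h1, mul_zero]

lemma gClamp_eq_one {n : ℕ} {L t : ℝ} (h : L + (1/3:ℝ)^n ≤ t) : gClamp n L t = 1 := by
  unfold gClamp
  rw [min_eq_right h, add_sub_cancel_left, max_eq_left (by positivity), ← mul_pow]
  norm_num

lemma dzero {w₁ w₂ : ℝ} (hsum : w₁ + w₂ = 1) {n : ℕ} {L t : ℝ}
    (h : t ≤ L ∨ L + (1/3:ℝ)^n ≤ t) :
    gClamp n L t - (w₁ * gClamp (n+1) L t + w₂ * gClamp (n+1) (L + 2/3^(n+1)) t) = 0 := by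
  have hL2 : (0:ℝ) ≤ 2/3^(n+1) := by positivity
  rcases h with h | h
  · rw [gClamp_eq_zero h, gClamp_eq_zero h, gClamp_eq_zero (by linarith)]
    ring
  · have e1 : L + (1/3:ℝ)^(n+1) ≤ t := by
      have : (1/3:ℝ)^(n+1) ≤ (1/3)^n := by
        apply pow_le_pow_of_le_one (by norm_num) (by norm_num) (by omega)
      linarith
    have e2 : (L + 2/3^(n+1)) + (1/3:ℝ)^(n+1) = L + (1/3)^n := by
      rw [div_pow, one_pow, div_pow, one_pow]; field_simp; ring
    rw [gClamp_eq_one h, gClamp_eq_one e1, gClamp_eq_one (by rw [e2]; exact h)]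
    linarith

noncomputable def GFun (w₁ w₂ : ℝ) (n : ℕ) (t : ℝ) : ℝ :=
  ∑ x : Fin n → Bool, cantorWt w₁ w₂ x * gClamp n (cantorLeft x) t

lemma GFun_succ (w₁ w₂ : ℝ) (n : ℕ) (t : ℝ) :
    GFun w₁ w₂ (n+1) t = ∑ x : Fin n → Bool, cantorWt w₁ w₂ x *
      (w₁ * gClamp (n+1) (cantorLeft x) t
        + w₂ * gClamp (n+1) (cantorLeft x + 2/3^(n+1)) t) := by
  unfold GFun
  rw [← Equiv.sum_comp (Fin.snocEquiv (fun _ => Bool))]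
  rw [Fintype.sum_prod_type_right]
  apply Finset.sum_congr rfl
  intro x _
  rw [Fintype.sum_bool]
  have he : ∀ b : Bool, (Fin.snocEquiv (fun _ : Fin (n+1) => Bool)) (b, x) = Fin.snoc x b := by
    intro b; funext i; rfl
  rw [he, he, cantorLeft_snoc, cantorLeft_snoc, cantorWt_snoc, cantorWt_snoc]
  norm_num
  ring

lemma GFun_diff {w₁ w₂ : ℝ} (hw₁ : 0 < w₁) (hw : w₁ ≤ w₂) (hsum : w₁ + w₂ = 1)
    (n : ℕ) (t : ℝ) : |GFun w₁ w₂ n t - GFun w₁ w₂ (n+1) t| ≤ w₂ ^ n := by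
  have h1 : (0:ℝ) ≤ w₁ := hw₁.le
  have h2 : (0:ℝ) ≤ w₂ := h1.trans hw
  rw [GFun_succ]
  unfold GFun
  rw [← Finset.sum_sub_distrib]
  have hterm : ∀ x : Fin n → Bool,
      cantorWt w₁ w₂ x * gClamp n (cantorLeft x) t -
        cantorWt w₁ w₂ x * (w₁ * gClamp (n+1) (cantorLeft x) t
          + w₂ * gClamp (n+1) (cantorLeft x + 2/3^(n+1)) t)
      = cantorWt w₁ w₂ x * (gClamp n (cantorLeft x) t -
          (w₁ * gClamp (n+1) (cantorLeft x) t
            + w₂ * gClamp (n+1) (cantorLeft x + 2/3^(n+1)) t)) := fun x => by ring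
  have hdabs : ∀ L : ℝ, |gClamp n L t - (w₁ * gClamp (n+1) L t
      + w₂ * gClamp (n+1) (L + 2/3^(n+1)) t)| ≤ 1 := by
    intro L
    have a1 := gClamp_nonneg n L t
    have a2 := gClamp_le_one n L t
    have b1 := gClamp_nonneg (n+1) L t
    have b2 := gClamp_le_one (n+1) L t
    have c1 := gClamp_nonneg (n+1) (L + 2/3^(n+1)) t
    have c2 := gClamp_le_one (n+1) (L + 2/3^(n+1)) t
    rw [abs_le]
    constructor <;> nlinarith
  by_cases hex : ∃ x₀ : Fin n → Bool,
      cantorLeft x₀ < t ∧ t < cantorLeft x₀ + (1/3)^n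
  · obtain ⟨x₀, hx₀1, hx₀2⟩ := hex
    rw [Finset.sum_eq_single x₀]
    · rw [hterm x₀, abs_mul]
      have := cantorWt_nonneg h1 h2 x₀
      rw [abs_of_nonneg this]
      calc cantorWt w₁ w₂ x₀ * |_| ≤ w₂^n * 1 := by
            apply mul_le_mul (cantorWt_le h1 hw x₀) (hdabs _) (abs_nonneg _) (by positivity)
        _ = w₂^n := mul_one _
    · intro b _ hb
      rw [hterm b]
      by_cases hbt : t ≤ cantorLeft b ∨ cantorLeft b + (1/3:ℝ)^n ≤ t
      · rw [dzero hsum hbt, mul_zero]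
      · push_neg at hbt
        obtain ⟨u1, u2⟩ := hbt
        exfalso
        have hsep := cantor_sep b x₀ hb
        rcases abs_cases (cantorLeft b - cantorLeft x₀) with ⟨he, _⟩ | ⟨he, _⟩ <;>
          rw [he] at hsep <;> linarith
    · intro h; exact absurd (Finset.mem_univ x₀) h
  · push_neg at hex
    have : ∀ x ∈ (Finset.univ : Finset (Fin n → Bool)),
        cantorWt w₁ w₂ x * gClamp n (cantorLeft x) t -
        cantorWt w₁ w₂ x * (w₁ * gClamp (n+1) (cantorLeft x) t
          + w₂ * gClamp (n+1) (cantorLeft x + 2/3^(n+1)) t) = 0 := by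
      intro x _
      rw [hterm x]
      have hx := hex x
      by_cases hbt : t ≤ cantorLeft x ∨ cantorLeft x + (1/3:ℝ)^n ≤ t
      · rw [dzero hsum hbt, mul_zero]
      · push_neg at hbt; exact absurd hbt.2 (not_lt.mpr (hx hbt.1))
    rw [Finset.sum_congr rfl this, Finset.sum_const_zero, abs_zero]
    positivity


lemma ofReal_max0 (s : ℝ) : ENNReal.ofReal s = ENNReal.ofReal (max s 0) := by
  rcases le_total s 0 with h | h
  · rw [ENNReal.ofReal_eq_zero.mpr h, max_eq_right h, ENNReal.ofReal_zero]
  · rw [max_eq_left h]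

lemma GFun_nonneg {w₁ w₂ : ℝ} (h1 : 0 ≤ w₁) (h2 : 0 ≤ w₂) (n : ℕ) (t : ℝ) :
    0 ≤ GFun w₁ w₂ n t := by
  apply Finset.sum_nonneg
  intro x _
  exact mul_nonneg (cantorWt_nonneg h1 h2 x) (gClamp_nonneg n (cantorLeft x) t)

lemma cantorApprox_Icc {w₁ w₂ : ℝ} (h1 : 0 ≤ w₁) (h2 : 0 ≤ w₂) (n : ℕ) (t : ℝ) :
    cantorApprox w₁ w₂ n (Set.Icc 0 t) = ENNReal.ofReal (GFun w₁ w₂ n t) := by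
  unfold cantorApprox
  rw [Measure.smul_apply, Measure.finset_sum_apply]
  have key : ∀ x : Fin n → Bool,
      (ENNReal.ofReal (cantorWt w₁ w₂ x) • volume.restrict (cantorInterval x)) (Set.Icc 0 t)
      = ENNReal.ofReal (cantorWt w₁ w₂ x *
          max (min t (cantorLeft x + (1/3)^n) - cantorLeft x) 0) := by
    intro x
    rw [Measure.smul_apply, Measure.restrict_apply measurableSet_Icc]
    rw [cantorInterval, Set.Icc_inter_Icc, Real.volume_Icc]
    rw [sup_eq_right.mpr (cantorLeft_nonneg x)]
    rw [ofReal_max0 (t ⊓ (cantorLeft x + (1/3)^n) - cantorLeft x)]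
    rw [smul_eq_mul, ← ENNReal.ofReal_mul (cantorWt_nonneg h1 h2 x)]
  rw [Finset.sum_congr rfl (fun x _ => key x)]
  rw [← ENNReal.ofReal_sum_of_nonneg (fun x _ =>
    mul_nonneg (cantorWt_nonneg h1 h2 x) (le_max_right _ _))]
  have h3 : (3:ℝ≥0∞)^n = ENNReal.ofReal ((3:ℝ)^n) := by
    rw [ENNReal.ofReal_pow (by norm_num : (0:ℝ) ≤ 3)]
    norm_num
  rw [smul_eq_mul, h3, ← ENNReal.ofReal_mul (by positivity)]
  congr 1
  unfold GFun gClamp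
  rw [Finset.mul_sum]
  apply Finset.sum_congr rfl
  intro x _
  ring

lemma distF_eq {w₁ w₂ : ℝ} (h1 : 0 ≤ w₁) (h2 : 0 ≤ w₂) (n : ℕ) (t : ℝ) :
    distF (cantorApprox w₁ w₂ n) t = GFun w₁ w₂ n t := by
  rw [distF, cantorApprox_Icc h1 h2, ENNReal.toReal_ofReal (GFun_nonneg h1 h2 n t)]

/-- Estimate (4.2): the distribution functions `F_n` of the approximating measures
`μ_n^w` satisfy `sup_{t∈[0,1]} |F_n(t) − F_{n+1}(t)| ≤ w₂^n`. -/
theorem stmt17 (w₁ w₂ : ℝ) (hw₁ : 0 < w₁) (hw : w₁ ≤ w₂) (hsum : w₁ + w₂ = 1)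
    (n : ℕ) :
    ∀ t ∈ Set.Icc (0:ℝ) 1,
      |distF (cantorApprox w₁ w₂ n) t - distF (cantorApprox w₁ w₂ (n+1)) t|
        ≤ w₂ ^ n := by
  intro t _
  have h1 : (0:ℝ) ≤ w₁ := hw₁.le
  have h2 : (0:ℝ) ≤ w₂ := h1.trans hw
  rw [distF_eq h1 h2, distF_eq h1 h2]
  exact GFun_diff hw₁ hw hsum n t
end
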